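/- arXiv:2006.14578 — 3 statements merged into one kernel-verified Lean document; each statement's English description precedes it below -/
import Mathlib

section
/- For positive invertible elements ρ in a finite von Neumann algebra (or positive definite matrices), the derivative of the logarithm along a derivation δ satisfies δ(ln ρ) = ∫₀^∞ (ρ + r)^{-1} δ(ρ) (ρ + r)^{-1} dr. -/
/-!
Write `ln x = ∫₀^∞ ((1 + r)⁻¹ - (x + r)⁻¹) dr` for `x > 0` (the subtracted scalar term makes the
integral converge) and apply it to the eigenvalues of `ρ`: this expresses `ln ρ` as
`∫₀^∞ ((1 + r)⁻¹ - (ρ + r)⁻¹) dr`. In the spectral decomposition the integrand is a finite sum of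
scalar functions times fixed matrices, so the linear map `δ` commutes with the integral; a
derivation kills scalars and satisfies `δ(a⁻¹) = -a⁻¹ δ(a) a⁻¹`.
-/

open Matrix MeasureTheory
open scoped ComplexOrder

attribute [local instance] Matrix.normedAddCommGroup Matrix.normedSpace

noncomputable section

open Set Filter Topology

section Leibniz

variable {R A : Type*} [CommSemiring R] [Ring A] [Algebra R A] {δ : A →ₗ[R] A}

theorem map_one_eq_zero_of_leibniz (hδ : ∀ x y, δ (x * y) = δ x * y + x * δ y) : δ 1 = 0 := by
  simpa using hδ 1 1

theorem map_algebraMap_eq_zero_of_leibniz (hδ : ∀ x y, δ (x * y) = δ x * y + x * δ y) (c : R) :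
    δ (algebraMap R A c) = 0 := by
  rw [Algebra.algebraMap_eq_smul_one, map_smul, map_one_eq_zero_of_leibniz hδ, smul_zero]

theorem map_ringInverse_of_leibniz (hδ : ∀ x y, δ (x * y) = δ x * y + x * δ y) (a : A) :
    δ (Ring.inverse a) = -(Ring.inverse a * δ a * Ring.inverse a) := by
  by_cases ha : IsUnit a
  · obtain ⟨u, rfl⟩ := ha
    have h := hδ ↑u⁻¹ u
    rw [Units.inv_mul, map_one_eq_zero_of_leibniz hδ] at h
    simp only [Ring.inverse_unit]
    calc δ ↑u⁻¹ = (δ ↑u⁻¹ * u + ↑u⁻¹ * δ u) * ↑u⁻¹ - ↑u⁻¹ * δ u * ↑u⁻¹ := by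
          simp [add_mul, mul_assoc]
      _ = _ := by rw [← h]; simp
  · simp [Ring.inverse_non_unit a ha]

end Leibniz

namespace Real

theorem hasDerivAt_log_one_add_sub_log_add {x r : ℝ} (hx : 0 < x) (hr : 0 ≤ r) :
    HasDerivAt (fun s => log (1 + s) - log (x + s)) ((1 + r)⁻¹ - (x + r)⁻¹) r := by
  have h1 := ((hasDerivAt_id' r).const_add 1).log (by positivity)
  have h2 := ((hasDerivAt_id' r).const_add x).log (by positivity)
  simpa using h1.fun_sub h2

theorem tendsto_log_one_add_sub_log_add (x : ℝ) :
    Tendsto (fun s => log (1 + s) - log (x + s)) atTop (𝓝 0) := by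
  have := (tendsto_log_comp_add_sub_log 1).sub (tendsto_log_comp_add_sub_log x)
  simp only [sub_self] at this
  refine this.congr fun s => ?_
  simp only [add_comm s]; ring

theorem integrableOn_inv_one_add_sub_inv_add {x : ℝ} (hx : 0 < x) :
    IntegrableOn (fun r => (1 + r)⁻¹ - (x + r)⁻¹) (Ioi 0) := by
  have hderiv := fun r (hr : r ∈ Ici (0 : ℝ)) => hasDerivAt_log_one_add_sub_log_add hx hr
  have hlim := tendsto_log_one_add_sub_log_add x
  rcases le_total 1 x with h | h
  · refine integrableOn_Ioi_deriv_of_nonneg' hderiv (fun r hr => ?_) hlim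
    exact sub_nonneg.2 (inv_anti₀ (by linarith [mem_Ioi.1 hr]) (by linarith))
  · refine integrableOn_Ioi_deriv_of_nonpos' hderiv (fun r hr => ?_) hlim
    exact sub_nonpos.2 (inv_anti₀ (by linarith [mem_Ioi.1 hr]) (by linarith))

theorem integral_inv_one_add_sub_inv_add {x : ℝ} (hx : 0 < x) :
    ∫ r in Ioi 0, ((1 + r)⁻¹ - (x + r)⁻¹) = log x := by
  rw [integral_Ioi_of_hasDerivAt_of_tendsto' (fun r hr => hasDerivAt_log_one_add_sub_log_add hx hr)
    (integrableOn_inv_one_add_sub_inv_add hx) (tendsto_log_one_add_sub_log_add x)]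
  simp

end Real

namespace Matrix

variable {n 𝕜 : Type*} [RCLike 𝕜] [Fintype n] [DecidableEq n] {A : Matrix n n 𝕜}

theorem IsHermitian.cfc_eq_sum_smul (hA : A.IsHermitian) (f : ℝ → ℝ) :
    cfc f A = ∑ i, f (hA.eigenvalues i) •
      Unitary.conjStarAlgAut 𝕜 _ hA.eigenvectorUnitary (single i i 1) := by
  rw [hA.cfc_eq, IsHermitian.cfc, ← sum_single_eq_diagonal, map_sum]
  refine Finset.sum_congr rfl fun i _ => ?_
  rw [RCLike.real_smul_eq_coe_smul (K := 𝕜), ← map_smul, smul_single, smul_eq_mul, mul_one]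
  rfl

theorem IsHermitian.integral_map_cfc {X E : Type*} [MeasurableSpace X] {μ : Measure X}
    [NormedAddCommGroup E] [NormedSpace ℝ E] [CompleteSpace E] (hA : A.IsHermitian)
    (L : Matrix n n 𝕜 →ₗ[ℝ] E) (f : X → ℝ → ℝ)
    (hf : ∀ i, Integrable (fun x => f x (hA.eigenvalues i)) μ) :
    ∫ x, L (cfc (f x) A) ∂μ = L (cfc (fun t => ∫ x, f x t ∂μ) A) := by
  simp_rw [hA.cfc_eq_sum_smul, map_sum, map_smul]
  rw [integral_finsetSum _ fun i _ => (hf i).smul_const _]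
  exact Finset.sum_congr rfl fun i _ => integral_smul_const _ _

theorem PosDef.pos_of_mem_spectrum (hA : A.PosDef) {x : ℝ} (hx : x ∈ spectrum ℝ A) : 0 < x := by
  obtain ⟨i, rfl⟩ := hA.1.spectrum_real_eq_range_eigenvalues ▸ hx
  exact hA.eigenvalues_pos i

theorem PosDef.cfc_inv_one_add_sub_inv_add {r : ℝ} (hA : A.PosDef) (hr : 0 ≤ r) :
    cfc (fun x => (1 + r)⁻¹ - (x + r)⁻¹) A = algebraMap ℝ _ (1 + r)⁻¹ - (A + r • 1)⁻¹ := by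
  have hA' : IsSelfAdjoint A := hA.1.isSelfAdjoint
  have hne : ∀ x ∈ spectrum ℝ A, x + r ≠ 0 := fun x hx =>
    (add_pos_of_pos_of_nonneg (hA.pos_of_mem_spectrum hx) hr).ne'
  have hcont : ContinuousOn (fun x => (x + r)⁻¹) (spectrum ℝ A) :=
    (continuousOn_id.add continuousOn_const).inv₀ hne
  rw [cfc_sub _ _ A continuousOn_const hcont, cfc_const _ A, cfc_inv (fun x => x + r) A hne,
    cfc_add_const r (fun x => x) A, cfc_id' ℝ A, Algebra.algebraMap_eq_smul_one r,
    nonsing_inv_eq_ringInverse]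

end Matrix

/-- For a derivation `δ` on the matrix algebra and a positive invertible `ρ`,
`δ(ln ρ) = ∫₀^∞ (ρ + r)⁻¹ δ(ρ) (ρ + r)⁻¹ dr`. -/
theorem derivation_log_integral {n : ℕ}
    (δ : Matrix (Fin n) (Fin n) ℂ →ₗ[ℂ] Matrix (Fin n) (Fin n) ℂ)
    (hLeibniz : ∀ x y, δ (x * y) = δ x * y + x * δ y)
    (ρ : Matrix (Fin n) (Fin n) ℂ) (hρ : ρ.PosDef) :
    δ (cfc Real.log ρ) =
      ∫ r in Set.Ioi (0 : ℝ),
        (ρ + r • (1 : Matrix (Fin n) (Fin n) ℂ))⁻¹ * δ ρ *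
          (ρ + r • (1 : Matrix (Fin n) (Fin n) ℂ))⁻¹ := by
  set D := δ.restrictScalars ℝ
  have hD : ∀ x y, D (x * y) = D x * y + x * D y := hLeibniz
  have hlog : cfc Real.log ρ = cfc (fun t : ℝ => ∫ r in Ioi (0 : ℝ), ((1 + r)⁻¹ - (t + r)⁻¹)) ρ :=
    cfc_congr fun t ht => (Real.integral_inv_one_add_sub_inv_add (hρ.pos_of_mem_spectrum ht)).symm
  calc δ (cfc Real.log ρ)
        = ∫ r in Ioi (0 : ℝ), D (cfc (fun t : ℝ => (1 + r)⁻¹ - (t + r)⁻¹) ρ) := by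
        rw [hlog, hρ.1.integral_map_cfc (μ := volume.restrict (Ioi 0)) D
          (fun r t => (1 + r)⁻¹ - (t + r)⁻¹) fun i =>
          Real.integrableOn_inv_one_add_sub_inv_add (hρ.eigenvalues_pos i)]
        rfl
    _ = _ := by
        refine setIntegral_congr_fun measurableSet_Ioi fun r hr => ?_
        rw [hρ.cfc_inv_one_add_sub_inv_add (le_of_lt hr), map_sub,
          map_algebraMap_eq_zero_of_leibniz hD, nonsing_inv_eq_ringInverse,
          map_ringInverse_of_leibniz hD, map_add, ← Algebra.algebraMap_eq_smul_one,
          map_algebraMap_eq_zero_of_leibniz hD]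
        simp only [add_zero, zero_sub, neg_neg]
        rfl
end
end

section
/- The function f(x) = (x − 1)/ln(x) (extended by f(1) = 1) is operator monotone on (0, ∞). -/
/-!
On `[0, ∞)` the function is an average of powers: `f x = ∫₀¹ x ^ r dr` (taken over `(0, 1]`,
where `(r, x) ↦ x ^ r` is jointly continuous). By the Löwner–Heinz inequality
(`CFC.rpow_le_rpow`) each `a ↦ a ^ r` with `r ∈ [0, 1]` is operator monotone, and the continuous
functional calculus commutes with the integral, so `f(a) = ∫₀¹ a ^ r dr` is operator monotone in
every C⋆-algebra, in particular for matrices with the Loewner order.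
-/

open Matrix
open scoped ComplexOrder

noncomputable section

/-- The function `f(x) = (x − 1)/ln x`, extended by `f(1) = 1`. -/
def logMeanFun (x : ℝ) : ℝ :=
  if x = 1 then 1 else (x - 1) / Real.log x

open MeasureTheory Set

lemma Real.rpow_le_max_one {x r : ℝ} (hx : 0 ≤ x) (hr : r ∈ Icc (0 : ℝ) 1) :
    x ^ r ≤ max 1 x := by
  rcases le_total x 1 with hx1 | hx1
  · exact (Real.rpow_le_one hx hx1 hr.1).trans (le_max_left _ _)
  · calc x ^ r ≤ x ^ (1 : ℝ) := Real.rpow_le_rpow_of_exponent_le hx1 hr.2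
      _ = x := Real.rpow_one x
      _ ≤ max 1 x := le_max_right _ _

lemma Real.continuousOn_uncurry_rpow :
    ContinuousOn (Function.uncurry fun r x : ℝ => x ^ r) (Ioi 0 ×ˢ univ) :=
  fun _ hp => (continuousAt_snd.rpow continuousAt_fst (Or.inr hp.1)).continuousWithinAt

lemma logMeanFun_eq_setIntegral_rpow {x : ℝ} (hx : 0 ≤ x) :
    logMeanFun x = ∫ r in Ioc (0 : ℝ) 1, x ^ r := by
  rcases hx.eq_or_lt with rfl | hx
  -- `Real.log 0 = 0` makes `logMeanFun 0 = 0`, which matches `0 ^ r = 0` for `r > 0`.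
  · rw [setIntegral_congr_fun measurableSet_Ioc fun r hr => Real.zero_rpow hr.1.ne']
    simp [logMeanFun]
  rw [← intervalIntegral.integral_of_le zero_le_one]
  rcases eq_or_ne x 1 with rfl | hx1
  · simp [logMeanFun]
  have hderiv (r : ℝ) : HasDerivAt (fun r => x ^ r / Real.log x) (x ^ r) r := by
    simpa [mul_div_cancel_right₀ _ (Real.log_ne_zero_of_pos_of_ne_one hx hx1)] using
      (Real.hasStrictDerivAt_const_rpow hx r).hasDerivAt.div_const (Real.log x)
  rw [intervalIntegral.integral_eq_sub_of_hasDerivAt (fun r _ => hderiv r)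
    ((Real.continuous_const_rpow hx.ne').intervalIntegrable 0 1)]
  simp [logMeanFun, hx1, sub_div]

namespace CFC

variable {A : Type*} [CStarAlgebra A] [PartialOrder A] [StarOrderedRing A] {a b : A}

lemma exists_norm_rpow_le_of_nonneg (ha : 0 ≤ a) :
    ∃ C, ∀ r ∈ Ioc (0 : ℝ) 1, ∀ z ∈ spectrum ℝ a, ‖z ^ r‖ ≤ C := by
  obtain ⟨C, hC⟩ := (spectrum.isBounded (𝕜 := ℝ) a).exists_norm_le
  refine ⟨max 1 C, fun r hr z hz => ?_⟩
  have hz0 : 0 ≤ z := spectrum_nonneg_of_nonneg ha hz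
  rw [Real.norm_of_nonneg (Real.rpow_nonneg hz0 r)]
  exact (Real.rpow_le_max_one hz0 (Ioc_subset_Icc_self hr)).trans
    (max_le_max le_rfl ((Real.le_norm_self z).trans (hC z hz)))

lemma integrableOn_Ioc_rpow (ha : 0 ≤ a) : IntegrableOn (fun r : ℝ => a ^ r) (Ioc 0 1) := by
  obtain ⟨C, hC⟩ := exists_norm_rpow_le_of_nonneg ha
  simp_rw [rpow_eq_cfc_real ha]
  exact integrableOn_cfc measurableSet_Ioc _ (fun _ => C) a
    (Real.continuousOn_uncurry_rpow.mono (prod_mono Ioc_subset_Ioi_self (subset_univ _)))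
    (ae_restrict_of_forall_mem measurableSet_Ioc hC) (hasFiniteIntegral_const C)

lemma cfc_setIntegral_Ioc_rpow (ha : 0 ≤ a) :
    cfc (fun x : ℝ => ∫ r in Ioc (0 : ℝ) 1, x ^ r) a = ∫ r in Ioc (0 : ℝ) 1, a ^ r := by
  obtain ⟨C, hC⟩ := exists_norm_rpow_le_of_nonneg ha
  simp_rw [rpow_eq_cfc_real ha]
  exact cfc_setIntegral measurableSet_Ioc _ (fun _ => C) a
    (Real.continuousOn_uncurry_rpow.mono (prod_mono Ioc_subset_Ioi_self (subset_univ _)))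
    (ae_restrict_of_forall_mem measurableSet_Ioc hC) (hasFiniteIntegral_const C)

lemma setIntegral_Ioc_rpow_mono (ha : 0 ≤ a) (hab : a ≤ b) :
    ∫ r in Ioc (0 : ℝ) 1, a ^ r ≤ ∫ r in Ioc (0 : ℝ) 1, b ^ r :=
  setIntegral_mono_on (integrableOn_Ioc_rpow ha) (integrableOn_Ioc_rpow (ha.trans hab))
    measurableSet_Ioc fun _ hr => rpow_le_rpow (Ioc_subset_Icc_self hr) hab

lemma cfc_logMeanFun_eq_setIntegral_rpow (ha : 0 ≤ a) :
    cfc logMeanFun a = ∫ r in Ioc (0 : ℝ) 1, a ^ r := by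
  rw [← cfc_setIntegral_Ioc_rpow ha]
  exact cfc_congr fun x hx => logMeanFun_eq_setIntegral_rpow (spectrum_nonneg_of_nonneg ha hx)

lemma monotoneOn_cfc_logMeanFun : MonotoneOn (cfc logMeanFun : A → A) (Ici 0) := by
  intro a ha b hb hab
  rw [cfc_logMeanFun_eq_setIntegral_rpow ha, cfc_logMeanFun_eq_setIntegral_rpow hb]
  exact setIntegral_Ioc_rpow_mono ha hab

end CFC

/-- The function `f(x) = (x − 1)/ln x` (with `f(1) = 1`) is operator
monotone on `(0, ∞)`: for all positive definite matrices `A ≤ B` (of any size, in the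
Loewner order), `f(A) ≤ f(B)`. -/
theorem logMeanFun_operatorMonotone :
    ∀ (n : ℕ) (A B : Matrix (Fin n) (Fin n) ℂ), A.PosDef → B.PosDef →
      (B - A).PosSemidef → (cfc logMeanFun B - cfc logMeanFun A).PosSemidef := by
  intro n A B hA hB hBA
  -- `ContinuousFunctionalCalculus` is a `Prop`, so the C⋆-algebra calculus on matrices and the
  -- Hermitian-matrix calculus of the statement produce the same `cfc`.
  open scoped Matrix.Norms.L2Operator MatrixOrder in
  exact CFC.monotoneOn_cfc_logMeanFun hA.posSemidef.nonneg hB.posSemidef.nonneg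
    (Matrix.le_iff.mpr hBA)
end
end

section
/- Let g(x) = (1/√(2π)) Σ_{k∈ℤ} e^{−(x−k)²/2} be the periodization of the standard Gaussian density. Then for all real x ∈ [0,1], 2e^{−1/2} + 2e^{−2} + 2e^{−9/2} + (48/125)e^{−25/2} ≤ √(2π)·g(x) ≤ 2 + 2e^{−1/2} + 2e^{−2} + (8/3)e^{−9/2}. -/
noncomputable section

/-- The periodization `g(x) = (1/√(2π)) ∑_{k ∈ ℤ} e^{−(x−k)²/2}` of the standard Gaussian
density. -/
def gaussPer (x : ℝ) : ℝ :=
  (Real.sqrt (2 * Real.pi))⁻¹ * ∑' k : ℤ, Real.exp (-(x - (k : ℝ)) ^ 2 / 2)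

/-!
For `x ∈ [0,1]` and `n : ℕ`, both `x - (n + 1)` and `x + n` have absolute value in `[n, n + 1]`,
so pairing the terms `k = n + 1` and `k = -n` of the periodized sum traps it between
`2 ∑_{n ≥ 1} e^{-n²/2}` and `2 ∑_{n ≥ 0} e^{-n²/2}`. The lower bound keeps four terms of the
first series; for the upper bound the tail `n ≥ 3` of the second is dominated by the geometric
series `e^{-9/2} ∑ e^{-3n} ≤ (4/3) e^{-9/2}`, since `e³ ≥ 4`.
-/

open Real Set

theorem tsum_int_mem_Icc_of_nat_of_neg_add_one {F : ℤ → ℝ} {l u : ℕ → ℝ}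
    (hl : ∀ n, 0 ≤ l n) (hu : Summable u)
    (hpos : ∀ n : ℕ, F n ∈ Icc (l n) (u n)) (hneg : ∀ n : ℕ, F (-(n + 1)) ∈ Icc (l n) (u n)) :
    ∑' k, F k ∈ Icc (2 * ∑' n, l n) (2 * ∑' n, u n) := by
  have hl_sum : Summable l := hu.of_nonneg_of_le hl fun n ↦ (hpos n).1.trans (hpos n).2
  have hpos_sum : Summable fun n : ℕ ↦ F n :=
    hu.of_nonneg_of_le (fun n ↦ (hl n).trans (hpos n).1) fun n ↦ (hpos n).2
  have hneg_sum : Summable fun n : ℕ ↦ F (-(n + 1)) :=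
    hu.of_nonneg_of_le (fun n ↦ (hl n).trans (hneg n).1) fun n ↦ (hneg n).2
  rw [tsum_of_nat_of_neg_add_one hpos_sum hneg_sum, two_mul, two_mul]
  exact ⟨add_le_add (hl_sum.tsum_le_tsum (fun n ↦ (hpos n).1) hpos_sum)
      (hl_sum.tsum_le_tsum (fun n ↦ (hneg n).1) hneg_sum),
    add_le_add (hpos_sum.tsum_le_tsum (fun n ↦ (hpos n).2) hu)
      (hneg_sum.tsum_le_tsum (fun n ↦ (hneg n).2) hu)⟩

def gauss (t : ℝ) : ℝ := exp (-t ^ 2 / 2)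

theorem gauss_pos (t : ℝ) : 0 < gauss t := exp_pos _

theorem gauss_le_gauss {s t : ℝ} (h : |s| ≤ |t|) : gauss t ≤ gauss s := by
  have := sq_le_sq.mpr h
  unfold gauss
  gcongr

theorem gauss_mem_Icc {t : ℝ} {n : ℕ} (h : |t| ∈ Icc (n : ℝ) (n + 1)) :
    gauss t ∈ Icc (gauss (n + 1)) (gauss n) := by
  constructor <;> apply gauss_le_gauss
  · exact h.2.trans (le_abs_self _)
  · exact (abs_of_nonneg n.cast_nonneg).trans_le h.1

theorem gauss_nat_add_le_mul_pow (m : ℝ) (n : ℕ) :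
    gauss (n + m) ≤ gauss m * exp (-m) ^ n := by
  rw [gauss, gauss, ← exp_nat_mul, ← exp_add]
  gcongr
  nlinarith [n.cast_nonneg (α := ℝ)]

theorem tsum_gauss_nat_add_le {m : ℝ} (hm : 0 < m) :
    ∑' n : ℕ, gauss (n + m) ≤ gauss m / (1 - exp (-m)) := by
  have hr : exp (-m) < 1 := exp_lt_one_iff.mpr (neg_lt_zero.mpr hm)
  have hgeom : Summable fun n : ℕ ↦ gauss m * exp (-m) ^ n :=
    (summable_geometric_of_lt_one (exp_pos _).le hr).mul_left _
  have hsum : Summable fun n : ℕ ↦ gauss (n + m) :=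
    hgeom.of_nonneg_of_le (fun _ ↦ (gauss_pos _).le) (gauss_nat_add_le_mul_pow m)
  calc ∑' n : ℕ, gauss (n + m)
      ≤ ∑' n : ℕ, gauss m * exp (-m) ^ n := hsum.tsum_le_tsum (gauss_nat_add_le_mul_pow m) hgeom
    _ = gauss m / (1 - exp (-m)) := by
        rw [tsum_mul_left, tsum_geometric_of_lt_one (exp_pos _).le hr, div_eq_mul_inv]

theorem summable_gauss_nat : Summable fun n : ℕ ↦ gauss n := by
  refine (summable_nat_add_iff 1).mp ?_
  have := (summable_geometric_of_lt_one (exp_pos _).le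
    (exp_lt_one_iff.mpr (neg_lt_zero.mpr one_pos))).mul_left (gauss 1)
  refine this.of_nonneg_of_le (fun _ ↦ (gauss_pos _).le) fun n ↦ ?_
  push_cast
  exact gauss_nat_add_le_mul_pow 1 n

theorem tsum_gauss_nat_le :
    ∑' n : ℕ, gauss n ≤ 1 + exp (-1/2) + exp (-2) + 4/3 * exp (-9/2) := by
  rw [← summable_gauss_nat.sum_add_tsum_nat_add 3]
  have htail : ∑' n : ℕ, gauss ((n + 3 : ℕ) : ℝ) ≤ 4/3 * exp (-9/2) := by
    have h3 : exp (-3) ≤ 1/4 := by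
      rw [exp_neg, inv_le_comm₀ (exp_pos _) (by norm_num)]
      linarith [add_one_le_exp 3]
    push_cast
    calc ∑' n : ℕ, gauss (n + 3) ≤ gauss 3 / (1 - exp (-3)) := tsum_gauss_nat_add_le (by norm_num)
      _ ≤ gauss 3 / (3/4) :=
        div_le_div_of_nonneg_left (gauss_pos 3).le (by norm_num) (by linarith)
      _ = 4/3 * exp (-9/2) := by rw [gauss]; ring_nf
  have hhead : ∑ n ∈ Finset.range 3, gauss n = 1 + exp (-1/2) + exp (-2) := by
    simp only [Finset.sum_range_succ, Finset.sum_range_zero, gauss]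
    norm_num
  linarith

theorem le_tsum_gauss_nat_add_one :
    exp (-1/2) + exp (-2) + exp (-9/2) + exp (-8) ≤ ∑' n : ℕ, gauss (n + 1) := by
  have hs : Summable fun n : ℕ ↦ gauss (n + 1) := by
    simpa using (summable_nat_add_iff 1).mpr summable_gauss_nat
  refine le_trans (le_of_eq ?_) (hs.sum_le_tsum (Finset.range 4) fun n _ ↦ (gauss_pos _).le)
  simp only [Finset.sum_range_succ, Finset.sum_range_zero, gauss]
  norm_num

theorem tsum_gauss_sub_int_mem_Icc {x : ℝ} (hx : x ∈ Icc (0 : ℝ) 1) :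
    ∑' k : ℤ, gauss (x - k) ∈
      Icc (2 * ∑' n : ℕ, gauss (n + 1)) (2 * ∑' n : ℕ, gauss n) := by
  obtain ⟨hx0, hx1⟩ := hx
  rw [← (Equiv.addRight (1 : ℤ)).tsum_eq]
  refine tsum_int_mem_Icc_of_nat_of_neg_add_one (fun _ ↦ (gauss_pos _).le) summable_gauss_nat
    (fun n ↦ gauss_mem_Icc ?_) (fun n ↦ gauss_mem_Icc ?_)
  · rw [Equiv.coe_addRight, abs_sub_comm, abs_of_nonneg] <;> push_cast
    exacts [⟨by linarith, by linarith⟩, by linarith]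
  · rw [Equiv.coe_addRight, abs_of_nonneg] <;> push_cast
    exacts [⟨by linarith, by linarith⟩, by linarith]

/-- For all `x ∈ [0,1]`,
`2e^{−1/2} + 2e^{−2} + 2e^{−9/2} + (48/125)e^{−25/2} ≤ √(2π)·g(x)` and
`√(2π)·g(x) ≤ 2 + 2e^{−1/2} + 2e^{−2} + (8/3)e^{−9/2}`. -/
theorem gaussPer_bounds (x : ℝ) (hx : x ∈ Set.Icc (0:ℝ) 1) :
    2 * Real.exp (-1/2) + 2 * Real.exp (-2) + 2 * Real.exp (-9/2) +
        (48/125) * Real.exp (-25/2) ≤ Real.sqrt (2 * Real.pi) * gaussPer x ∧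
    Real.sqrt (2 * Real.pi) * gaussPer x ≤
        2 + 2 * Real.exp (-1/2) + 2 * Real.exp (-2) + (8/3) * Real.exp (-9/2) := by
  have hper : Real.sqrt (2 * Real.pi) * gaussPer x = ∑' k : ℤ, gauss (x - k) :=
    mul_inv_cancel_left₀ (by positivity) _
  have h8 : exp (-25/2) ≤ exp (-8) := exp_le_exp.mpr (by norm_num)
  obtain ⟨hlower, hupper⟩ := tsum_gauss_sub_int_mem_Icc hx
  rw [hper]
  constructor
  · linarith [le_tsum_gauss_nat_add_one, exp_pos (-8)]
  · linarith [tsum_gauss_nat_le]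
end
end
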